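/- 𝔰 = 𝔰_{ω,ω}: the splitting number equals the least cardinality of an (ω,ω)-splitting family. -/

import Mathlib

open Set

def Splits (x a : Set ℕ) : Prop := (a ∩ x).Infinite ∧ (a \ x).Infinite

def SplittingFamily (F : Set (Set ℕ)) : Prop :=
  ∀ a : Set ℕ, a.Infinite → ∃ x ∈ F, Splits x a

def OmegaOmegaSplitting (F : Set (Set ℕ)) : Prop :=
  ∀ a : ℕ → Set ℕ, (∀ n, (a n).Infinite) →
    ∃ x ∈ F, {n | (a n ∩ x).Infinite}.Infinite ∧ {n | (a n \ x).Infinite}.Infinite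

noncomputable def sNum : Cardinal :=
  sInf {c | ∃ F : Set (Set ℕ), SplittingFamily F ∧ Cardinal.mk F = c}

noncomputable def sOmegaOmegaNum : Cardinal :=
  sInf {c | ∃ F : Set (Set ℕ), OmegaOmegaSplitting F ∧ Cardinal.mk F = c}

def ADFamily (A : Set (Set ℕ)) : Prop :=
  (∀ a ∈ A, a.Infinite) ∧ A.Pairwise fun a b => (a ∩ b).Finite

def MADFamily (A : Set (Set ℕ)) : Prop :=
  ADFamily A ∧ A.Infinite ∧ ∀ B, ADFamily B → A ⊆ B → A = B

noncomputable def aNum : Cardinal :=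
  sInf {c | ∃ A : Set (Set ℕ), MADFamily A ∧ Cardinal.mk A = c}

/-- The ideal generated by an a.d. family together with the finite sets:
`b ∈ adIdeal A` iff `b ⊆* a₀ ∪ ⋯ ∪ a_k` for finitely many members of `A`. -/
def adIdeal (A : Set (Set ℕ)) : Set (Set ℕ) :=
  {b | ∃ S : Finset (Set ℕ), ↑S ⊆ A ∧ (b \ ⋃ a ∈ S, a).Finite}

def CompSep (A : Set (Set ℕ)) : Prop :=
  ∀ b : Set ℕ, b ∉ adIdeal A → ∃ a ∈ A, a ⊆ b

noncomputable def bNum : Cardinal :=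
  sInf {c | ∃ F : Set (ℕ → ℕ),
    (∀ g : ℕ → ℕ, ∃ f ∈ F, {n | g n < f n}.Infinite) ∧ Cardinal.mk F = c}

def BlockSplitting (F : Set (Set ℕ)) : Prop :=
  ∀ s : ℕ → Finset ℕ, (∀ n, (s n).Nonempty) →
    (Pairwise fun m n => Disjoint (s m) (s n)) →
    (⋃ n, (s n : Set ℕ)) = Set.univ →
    ∃ x ∈ F, {n | (s n : Set ℕ) ⊆ x}.Infinite ∧ {n | (s n : Set ℕ) ∩ x = ∅}.Infinite

/-- `sel x false = x = x⁰`, `sel x true = xᶜ = x¹`. -/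
def sel (x : Set ℕ) : Bool → Set ℕ
  | false => x
  | true => xᶜ

/-- An element of `2^{<κ}`: a binary sequence of some length `dom < κ`. -/
structure PNode (κ : Ordinal) where
  dom : Ordinal
  dom_lt : dom < κ
  val : ∀ ξ : Ordinal, ξ < dom → Bool

/-- End-extension of nodes. -/
def PNode.Ext {κ : Ordinal} (σ τ : PNode κ) : Prop :=
  ∃ h : σ.dom ≤ τ.dom, ∀ ξ (hξ : ξ < σ.dom), σ.val ξ hξ = τ.val ξ (lt_of_lt_of_le hξ h)

/-!
Every (ω,ω)-splitting family is splitting (take `aₙ` constant), so the content is an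
(ω,ω)-splitting family of size `𝔰`.

If `𝔰 < 𝔟`, a splitting family `F` of size `𝔰` already works. Otherwise, for some `(aₙ)`,
every `x ∈ F` has a side `xⁱ` meeting only finitely many `aₙ` in an infinite set; fewer than
`𝔟` functions `n ↦ max (aₙ ∩ xⁱ)` are dominated by one `g`, and points `tₙ ∈ aₙ` above `g n`
form a set that no `x ∈ F` splits.

If `𝔟 ≤ 𝔰`, combine a splitting family `F` with an unbounded family `U`: the iterates of
`f ∈ U` (made monotone and above the identity) cut `ℕ` into blocks, and `x ∈ F` gives the union
of the blocks indexed by `x`. Given `(aₙ)`, fix intervals `(g m, g (m + 1))` each meeting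
`a₀, …, aₘ`. If `f n > g (n + 2)` then one of the two `g`-intervals after `n` fits in a single
`f`-block, so infinitely many blocks meet every `aₜ`; a member of `F` splitting the set of their
indices splits every `aₜ`. This family has size at most `𝔰 · 𝔟 = 𝔰`.
-/

open scoped Cardinal

def Unbounded (U : Set (ℕ → ℕ)) : Prop :=
  ∀ g : ℕ → ℕ, ∃ f ∈ U, {n | g n < f n}.Infinite

lemma splits_iff_forall_sel {x a : Set ℕ} : Splits x a ↔ ∀ i, (a ∩ sel x i).Infinite := by
  simp [Splits, Bool.forall_bool, sel, sdiff_eq]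

lemma omegaOmegaSplitting_iff_forall_sel {F : Set (Set ℕ)} :
    OmegaOmegaSplitting F ↔ ∀ a : ℕ → Set ℕ, (∀ n, (a n).Infinite) →
      ∃ x ∈ F, ∀ i, {n | (a n ∩ sel x i).Infinite}.Infinite := by
  simp [OmegaOmegaSplitting, Bool.forall_bool, sel, sdiff_eq]

lemma Set.Infinite.exists_splits {a : Set ℕ} (ha : a.Infinite) : ∃ x, Splits x a := by
  set e := Nat.nth (· ∈ a)
  have he : e.Injective := Nat.nth_injective ha
  refine ⟨range fun k => e (2 * k), infinite_of_injective_forall_mem (f := fun k => e (2 * k))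
    (he.comp fun _ _ h => by omega) fun k => ⟨Nat.nth_mem_of_infinite ha _, k, rfl⟩,
    infinite_of_injective_forall_mem (f := fun k => e (2 * k + 1))
    (he.comp fun _ _ h => by omega) fun k => ⟨Nat.nth_mem_of_infinite ha _, ?_⟩⟩
  rintro ⟨j, hj⟩
  have := he hj
  omega

lemma splittingFamily_univ : SplittingFamily univ := fun _ ha =>
  let ⟨x, hx⟩ := ha.exists_splits
  ⟨x, mem_univ x, hx⟩

lemma OmegaOmegaSplitting.splittingFamily {F : Set (Set ℕ)} (hF : OmegaOmegaSplitting F) :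
    SplittingFamily F := fun b hb =>
  let ⟨x, hxF, h₁, h₂⟩ := hF (fun _ => b) fun _ => hb
  ⟨x, hxF, h₁.nonempty.some_mem, h₂.nonempty.some_mem⟩

lemma unbounded_univ : Unbounded univ := fun g =>
  ⟨fun n => g n + 1, mem_univ _, infinite_univ.mono fun n _ => Nat.lt_succ_self (g n)⟩

lemma Unbounded.infinite {U : Set (ℕ → ℕ)} (hU : Unbounded U) : U.Infinite := by
  intro hfin
  obtain ⟨f, hf, hinf⟩ := hU fun n => ∑ f ∈ hfin.toFinset, f n
  refine hinf (finite_empty.subset fun n hn => ?_)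
  exact (Finset.single_le_sum (f := fun f : ℕ → ℕ => f n) (fun _ _ => Nat.zero_le _)
    (hfin.mem_toFinset.2 hf)).not_gt hn

lemma sNum_le_mk {F : Set (Set ℕ)} (hF : SplittingFamily F) : sNum ≤ #F :=
  csInf_le' ⟨F, hF, rfl⟩

lemma sOmegaOmegaNum_le_mk {F : Set (Set ℕ)} (hF : OmegaOmegaSplitting F) :
    sOmegaOmegaNum ≤ #F :=
  csInf_le' ⟨F, hF, rfl⟩

lemma bNum_le_mk {U : Set (ℕ → ℕ)} (hU : Unbounded U) : bNum ≤ #U :=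
  csInf_le' ⟨U, hU, rfl⟩

lemma exists_splittingFamily_mk_eq_sNum : ∃ F, SplittingFamily F ∧ #F = sNum :=
  csInf_mem (s := {c | ∃ F : Set (Set ℕ), SplittingFamily F ∧ #F = c})
    ⟨_, univ, splittingFamily_univ, rfl⟩

lemma exists_unbounded_mk_eq_bNum : ∃ U, Unbounded U ∧ #U = bNum :=
  csInf_mem (s := {c | ∃ U : Set (ℕ → ℕ), Unbounded U ∧ #U = c}) ⟨_, univ, unbounded_univ, rfl⟩

lemma aleph0_le_bNum : ℵ₀ ≤ bNum := by
  obtain ⟨U, hU, hUb⟩ := exists_unbounded_mk_eq_bNum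
  exact hUb ▸ Cardinal.infinite_iff.1 hU.infinite.to_subtype

lemma exists_forall_finite_of_mk_lt_bNum {ι : Type} (φ : ι → ℕ → ℕ) (h : #ι < bNum) :
    ∃ g : ℕ → ℕ, ∀ i, {n | g n < φ i n}.Finite := by
  by_contra! hφ
  have hU : Unbounded (range φ) := fun g =>
    let ⟨i, hi⟩ := hφ g
    ⟨φ i, mem_range_self i, hi⟩
  exact ((bNum_le_mk hU).trans Cardinal.mk_range_le).not_gt h

theorem SplittingFamily.omegaOmegaSplitting_of_mk_lt_bNum {F : Set (Set ℕ)}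
    (hF : SplittingFamily F) (hFb : #F < bNum) : OmegaOmegaSplitting F := by
  rw [omegaOmegaSplitting_iff_forall_sel]
  intro a ha
  by_contra! hfin
  choose! i hi using hfin
  obtain ⟨g, hg⟩ := exists_forall_finite_of_mk_lt_bNum
    (fun (x : F) n => sSup (a n ∩ sel x (i x))) hFb
  choose t ht_mem ht_gt using fun n => (ha n).exists_gt (g n + n)
  have ht : (range t).Infinite :=
    infinite_of_forall_exists_gt fun n => ⟨t n, mem_range_self n, by grind⟩
  obtain ⟨x, hxF, hx⟩ := hF _ ht
  refine splits_iff_forall_sel.1 hx (i x) ((((hi x hxF).union (hg ⟨x, hxF⟩)).image t).subset ?_)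
  rintro _ ⟨⟨n, rfl⟩, hn⟩
  refine ⟨n, ?_, rfl⟩
  by_contra hn'
  simp only [mem_union, mem_ofPred_eq, not_or, Set.not_infinite, not_lt] at hn'
  have := le_csSup hn'.1.bddAbove ⟨ht_mem n, hn⟩
  have := ht_gt n
  omega

section Blocks

def block (f : ℕ → ℕ) (k : ℕ) : Set ℕ := Ico (f^[k] 0) (f^[k + 1] 0)

def blockUnion (f : ℕ → ℕ) (x : Set ℕ) : Set ℕ := ⋃ k ∈ x, block f k

variable {f : ℕ → ℕ}

lemma mem_block {j k : ℕ} : j ∈ block f k ↔ f^[k] 0 ≤ j ∧ j < f^[k + 1] 0 := Iff.rfl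

lemma strictMono_iterate_zero (hf : ∀ n, n < f n) : StrictMono fun k => f^[k] 0 :=
  strictMono_nat_of_lt_succ fun k => by simpa only [Function.iterate_succ_apply'] using hf _

lemma le_iterate_zero (hf : ∀ n, n < f n) (k : ℕ) : k ≤ f^[k] 0 :=
  (strictMono_iterate_zero hf).le_apply

lemma exists_mem_block (hf : ∀ n, n < f n) (j : ℕ) : ∃ k, j ∈ block f k := by
  have hex : ∃ k, j < f^[k] 0 := ⟨j + 1, le_iterate_zero hf (j + 1)⟩
  obtain ⟨k, hk⟩ : ∃ k, Nat.find hex = k + 1 :=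
    Nat.exists_eq_succ_of_ne_zero fun h0 => by simpa [h0] using Nat.find_spec hex
  exact ⟨k, not_lt.1 (Nat.find_min hex (by omega)), hk ▸ Nat.find_spec hex⟩

lemma eq_of_mem_block (hf : ∀ n, n < f n) {j k l : ℕ} (hk : j ∈ block f k)
    (hl : j ∈ block f l) : k = l := by
  have hmono := (strictMono_iterate_zero hf).monotone
  by_contra hne
  rcases Nat.lt_or_gt_of_ne hne with h | h
  · exact (hk.2.trans_le (hmono h)).not_ge hl.1
  · exact (hl.2.trans_le (hmono h)).not_ge hk.1

lemma blockUnion_compl (hf : ∀ n, n < f n) (x : Set ℕ) :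
    blockUnion f xᶜ = (blockUnion f x)ᶜ := by
  ext j
  obtain ⟨k, hk⟩ := exists_mem_block hf j
  have hblock : ∀ l, j ∈ block f l ↔ l = k :=
    fun l => ⟨fun hl => eq_of_mem_block hf hl hk, fun h => h ▸ hk⟩
  simp only [blockUnion, mem_compl_iff, mem_iUnion, hblock, exists_prop, exists_eq_right]

lemma blockUnion_sel (hf : ∀ n, n < f n) (x : Set ℕ) (i : Bool) :
    blockUnion f (sel x i) = sel (blockUnion f x) i := by
  cases i
  · rfl
  · exact blockUnion_compl hf x

lemma infinite_inter_blockUnion (hf : ∀ n, n < f n) {T y b : Set ℕ} {t : ℕ}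
    (hT : (T ∩ y).Infinite) (hb : ∀ k ∈ T, t ≤ k → (b ∩ block f k).Nonempty) :
    (b ∩ blockUnion f y).Infinite := by
  refine infinite_of_forall_exists_gt fun N => ?_
  obtain ⟨k, ⟨hkT, hky⟩, hk⟩ := hT.exists_gt (max N t)
  obtain ⟨j, hjb, hjk⟩ := hb k hkT (by omega)
  have := le_iterate_zero hf k
  exact ⟨j, ⟨hjb, mem_biUnion hky hjk⟩, by grind [mem_block]⟩

/-- The two `g`-intervals following `n` lie below `f n`; the block containing `n` either
contains the first one or ends inside it, and then the next block reaches past `f n`. -/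
lemma exists_Ioo_subset_block (hfm : Monotone f) (hf : ∀ n, n < f n) {g : ℕ → ℕ}
    (hg : StrictMono g) {n : ℕ} (hn : g (n + 2) < f n) :
    ∃ k, n < f^[k + 1] 0 ∧ ∃ m, k ≤ m ∧ Ioo (g m) (g (m + 1)) ⊆ block f k := by
  obtain ⟨k, hkn, hnk⟩ := exists_mem_block hf n
  have hk : k ≤ n := (le_iterate_zero hf k).trans hkn
  have hgn : n ≤ g n := hg.le_apply
  by_cases hgk : g (n + 1) ≤ f^[k + 1] 0
  · exact ⟨k, hnk, n, hk, fun j hj => ⟨by grind, hj.2.trans_le hgk⟩⟩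
  · have hnext : f n ≤ f^[k + 2] 0 := by
      rw [Function.iterate_succ_apply']
      exact hfm hnk.le
    refine ⟨k + 1, hnk.trans (strictMono_iterate_zero hf (Nat.lt_succ_self _)), n + 1,
      by omega, fun j hj => ⟨by grind, ?_⟩⟩
    exact hj.2.trans (hn.trans_le hnext)

end Blocks

lemma exists_strictMono_forall_le_inter_Ioo_nonempty {a : ℕ → Set ℕ}
    (ha : ∀ n, (a n).Infinite) :
    ∃ g : ℕ → ℕ, StrictMono g ∧ ∀ m, ∀ t ≤ m, (a t ∩ Ioo (g m) (g (m + 1))).Nonempty := by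
  have hbound : ∀ p, ∃ q, ∀ t ≤ p, (a t ∩ Ioo p q).Nonempty := by
    intro p
    choose j hja hjp using fun t => (ha t).exists_gt p
    refine ⟨(Finset.range (p + 1)).sup j + 1, fun t ht => ⟨j t, hja t, hjp t, ?_⟩⟩
    have := Finset.le_sup (f := j) (Finset.mem_range.2 (by omega : t < p + 1))
    omega
  choose H hH using hbound
  have hH_lt : ∀ p, p < H p := fun p =>
    let ⟨_, _, h₁, h₂⟩ := hH p 0 (Nat.zero_le p)
    h₁.trans h₂
  refine ⟨fun m => H^[m] 0, strictMono_iterate_zero hH_lt, fun m t htm => ?_⟩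
  simp only [Function.iterate_succ_apply']
  exact hH _ t (htm.trans (le_iterate_zero hH_lt m))

def majorant (f : ℕ → ℕ) (n : ℕ) : ℕ := partialSups f n + n + 1

lemma monotone_majorant (f : ℕ → ℕ) : Monotone (majorant f) := fun _ _ h => by
  have := (partialSups f).monotone h
  simp only [majorant]
  omega

lemma lt_majorant (f : ℕ → ℕ) (n : ℕ) : n < majorant f n := by
  simp only [majorant]
  omega

lemma le_majorant (f : ℕ → ℕ) (n : ℕ) : f n ≤ majorant f n := by
  have : f n ≤ partialSups f n := le_partialSups f n
  simp only [majorant]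
  omega

theorem SplittingFamily.omegaOmegaSplitting_image2_blockUnion {F : Set (Set ℕ)}
    {U : Set (ℕ → ℕ)} (hF : SplittingFamily F) (hU : Unbounded U) :
    OmegaOmegaSplitting (image2 (fun x f => blockUnion (majorant f) x) F U) := by
  rw [omegaOmegaSplitting_iff_forall_sel]
  intro a ha
  obtain ⟨g, hg, hga⟩ := exists_strictMono_forall_le_inter_Ioo_nonempty ha
  obtain ⟨f₀, hf₀U, hf₀⟩ := hU fun n => g (n + 2)
  set f := majorant f₀
  have hf : ∀ n, n < f n := lt_majorant f₀
  have hS : {k | ∀ t ≤ k, (a t ∩ block f k).Nonempty}.Infinite := by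
    refine infinite_of_forall_exists_gt fun N => ?_
    obtain ⟨n, hn, hNn⟩ := hf₀.exists_gt (f^[N + 1] 0)
    obtain ⟨k, hnk, m, hkm, hsub⟩ := exists_Ioo_subset_block (monotone_majorant f₀) hf hg
      (lt_of_lt_of_le hn (le_majorant f₀ n))
    refine ⟨k, fun t ht => (hga m t (ht.trans hkm)).mono (inter_subset_inter_right _ hsub), ?_⟩
    exact Nat.succ_lt_succ_iff.1 ((strictMono_iterate_zero hf).lt_iff_lt.1 (hNn.trans hnk))
  obtain ⟨x, hxF, hx⟩ := hF _ hS
  refine ⟨blockUnion f x, mem_image2_of_mem hxF hf₀U, fun i => infinite_univ.mono fun t _ => ?_⟩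
  rw [mem_ofPred_eq, ← blockUnion_sel hf]
  exact infinite_inter_blockUnion hf (splits_iff_forall_sel.1 hx i) fun k hk htk => hk t htk

theorem exists_omegaOmegaSplitting_mk_le_sNum : ∃ G, OmegaOmegaSplitting G ∧ #G ≤ sNum := by
  obtain ⟨F, hF, hFs⟩ := exists_splittingFamily_mk_eq_sNum
  rcases lt_or_ge sNum bNum with hsb | hbs
  · exact ⟨F, hF.omegaOmegaSplitting_of_mk_lt_bNum (hFs ▸ hsb), hFs.le⟩
  obtain ⟨U, hU, hUb⟩ := exists_unbounded_mk_eq_bNum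
  refine ⟨_, hF.omegaOmegaSplitting_image2_blockUnion hU, ?_⟩
  calc #(image2 (fun x f => blockUnion (majorant f) x) F U) ≤ #F * #U := Cardinal.mk_image2_le
    _ ≤ sNum * sNum := mul_le_mul' hFs.le (hUb.trans_le hbs)
    _ = sNum := Cardinal.mul_eq_self (aleph0_le_bNum.trans hbs)

theorem sNum_le_sOmegaOmegaNum : sNum ≤ sOmegaOmegaNum := by
  obtain ⟨G, hG, -⟩ := exists_omegaOmegaSplitting_mk_le_sNum
  exact le_csInf ⟨_, G, hG, rfl⟩ fun _ ⟨H, hH, hHc⟩ => hHc ▸ sNum_le_mk hH.splittingFamily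

/-- 𝔰 = 𝔰_{ω,ω}. -/
theorem stmt4 : sNum = sOmegaOmegaNum := by
  obtain ⟨G, hG, hGs⟩ := exists_omegaOmegaSplitting_mk_le_sNum
  exact sNum_le_sOmegaOmegaNum.antisymm ((sOmegaOmegaNum_le_mk hG).trans hGs)
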